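/- arXiv:1410.0384 — 5 statements merged into one kernel-verified Lean document; each statement's English description precedes it below -/
import Mathlib

section
/- Let Y be a real random variable with finite exponential moments of all orders, and let Λ(λ) = log E[e^{λY}]. Then lim_{λ→−∞} Λ(λ)/λ equals the essential infimum of Y (possibly −∞). -/
open MeasureTheory Real Filter

/-!
For `t < 0`, if `c ≤ Y` a.s. then `E[exp (tY)] ≤ exp (tc)`, so `Λ(t)/t ≥ c`. Conversely, if
`essinf Y < b` then `p = P[Y ≤ b] > 0`, and the Chernoff bound `p ≤ exp (-tb + Λ(t))` gives
`Λ(t)/t ≤ b + log p / t → b`.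
-/

namespace ProbabilityTheory

variable {Ω : Type*} [MeasurableSpace Ω] {μ : Measure Ω} {X : Ω → ℝ}

lemma measure_le_ne_zero_of_essInf_lt {β : Type*} [CompleteLinearOrder β] {f : Ω → β} {b : β}
    (h : essInf f μ < b) : μ {ω | f ω ≤ b} ≠ 0 := by
  intro h0
  refine (le_essInf_of_ae_le b ?_).not_gt h
  filter_upwards [measure_eq_zero_iff_ae_notMem.1 h0] with ω hω
  exact (not_le.1 hω).le

lemma cgf_le_mul_of_ae_le [IsProbabilityMeasure μ] {c t : ℝ} (hc : ∀ᵐ ω ∂μ, c ≤ X ω)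
    (ht : t ≤ 0) (hint : Integrable (fun ω ↦ exp (t * X ω)) μ) :
    cgf X μ t ≤ t * c := by
  have hmgf : mgf X μ t ≤ exp (t * c) := by
    simpa using mgf_anti_of_nonpos (X := fun _ ↦ c) hc ht (integrable_const _)
  exact (log_le_iff_le_exp (mgf_pos hint)).2 hmgf

lemma mul_add_log_measureReal_le_cgf [IsFiniteMeasure μ] {b t : ℝ} (ht : t ≤ 0)
    (hint : Integrable (fun ω ↦ exp (t * X ω)) μ) (hpos : 0 < μ.real {ω | X ω ≤ b}) :
    t * b + log (μ.real {ω | X ω ≤ b}) ≤ cgf X μ t := by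
  have := (log_le_iff_le_exp hpos).2 (measure_le_le_exp_cgf b ht hint)
  linarith

variable [IsProbabilityMeasure μ]

lemma essInf_le_liminf_cgf_div (hint : ∀ t ≤ 0, Integrable (fun ω ↦ exp (t * X ω)) μ) :
    essInf (fun ω ↦ (X ω : EReal)) μ ≤ liminf (fun t ↦ ((cgf X μ t / t : ℝ) : EReal)) atBot := by
  refine EReal.ge_of_forall_gt_iff_ge.1 fun c hc ↦ le_liminf_of_le (by isBoundedDefault) ?_
  have hcX : ∀ᵐ ω ∂μ, c ≤ X ω := by
    filter_upwards [ae_lt_of_lt_essInf hc] with ω hω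
    exact_mod_cast hω.le
  filter_upwards [eventually_lt_atBot 0] with t ht
  rw [EReal.coe_le_coe_iff, le_div_iff_of_neg ht, mul_comm]
  exact cgf_le_mul_of_ae_le hcX ht.le (hint t ht.le)

lemma limsup_cgf_div_le_essInf (hint : ∀ t ≤ 0, Integrable (fun ω ↦ exp (t * X ω)) μ) :
    limsup (fun t ↦ ((cgf X μ t / t : ℝ) : EReal)) atBot ≤ essInf (fun ω ↦ (X ω : EReal)) μ := by
  refine EReal.le_of_forall_lt_iff_le.1 fun b hb ↦ ?_
  set p := μ.real {ω | X ω ≤ b}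
  have hp : 0 < p := by
    refine ENNReal.toReal_pos ?_ (measure_ne_top μ _)
    simpa [EReal.coe_le_coe_iff] using measure_le_ne_zero_of_essInf_lt hb
  have hbound : ∀ᶠ t in atBot, ((cgf X μ t / t : ℝ) : EReal) ≤ ((b + log p / t : ℝ) : EReal) := by
    filter_upwards [eventually_lt_atBot 0] with t ht
    rw [EReal.coe_le_coe_iff, div_le_iff_of_neg ht, add_mul, div_mul_cancel₀ _ ht.ne, mul_comm]
    exact mul_add_log_measureReal_le_cgf ht.le (hint t ht.le) hp
  have hlim : Tendsto (fun t ↦ ((b + log p / t : ℝ) : EReal)) atBot (nhds (b : EReal)) := by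
    rw [EReal.tendsto_coe]
    simpa using (tendsto_const_nhds.div_atBot tendsto_id).const_add b
  exact (limsup_le_limsup hbound).trans_eq hlim.limsup_eq

end ProbabilityTheory

theorem stmt_1_general {Ω : Type*} [MeasurableSpace Ω] (μ : Measure Ω) [IsProbabilityMeasure μ]
    (Y : Ω → ℝ)
    (hInt : ∀ l : ℝ, Integrable (fun ω => Real.exp (l * Y ω)) μ) :
    Tendsto (fun l : ℝ => ((Real.log (∫ ω, Real.exp (l * Y ω) ∂μ) / l : ℝ) : EReal))
      atBot (nhds (essInf (fun ω => (Y ω : EReal)) μ)) :=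
  tendsto_of_le_liminf_of_limsup_le
    (ProbabilityTheory.essInf_le_liminf_cgf_div fun t _ ↦ hInt t)
    (ProbabilityTheory.limsup_cgf_div_le_essInf fun t _ ↦ hInt t)

/-- For a real random variable `Y` with all exponential moments finite and
cumulant generating function `Λ(λ) = log E[exp (λY)]`, we have
`Λ(λ)/λ → essinf Y` (possibly `−∞`, hence stated in `EReal`) as `λ → −∞`. -/
theorem stmt_1 {Ω : Type*} [MeasurableSpace Ω] (μ : Measure Ω) [IsProbabilityMeasure μ]
    (Y : Ω → ℝ) (hY : Measurable Y)
    (hInt : ∀ l : ℝ, Integrable (fun ω => Real.exp (l * Y ω)) μ) :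
    Tendsto (fun l : ℝ => ((Real.log (∫ ω, Real.exp (l * Y ω) ∂μ) / l : ℝ) : EReal))
      atBot (nhds (essInf (fun ω => (Y ω : EReal)) μ)) :=
  stmt_1_general μ Y hInt
end

section
/- Let Y be a real random variable, not almost surely constant, with all exponential moments finite. Then Λ(λ) = log E[e^{λY}] is strictly convex on ℝ; in particular, the map λ ↦ E[Y e^{λY}]/E[e^{λY}] is strictly increasing. -/
open MeasureTheory Real Filter

/-! Λ is the cumulant generating function `cgf Y μ`, and Λ'(λ) is the displayed ratio.
Λ''(λ) is the variance of `Y` under the tilted measure `e^{λY} μ / E[e^{λY}]`, which has the same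
null sets as `μ`; since `Y` is not a.s. constant this variance is positive. Hence Λ' is strictly
increasing and Λ is strictly convex. -/

namespace ProbabilityTheory

variable {Ω : Type*} [MeasurableSpace Ω] {μ : Measure Ω} {X : Ω → ℝ}

lemma mem_interior_integrableExpSet_of_forall_integrable
    (h : ∀ t, Integrable (fun ω ↦ exp (t * X ω)) μ) (t : ℝ) :
    t ∈ interior (integrableExpSet X μ) := by
  simp [Set.eq_univ_of_forall (s := integrableExpSet X μ) h]

lemma neZero_of_forall_not_ae_eq_const (hX : ∀ c : ℝ, ¬ X =ᵐ[μ] fun _ ↦ c) : NeZero μ :=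
  ⟨fun hμ ↦ hX 0 (by simp [hμ, EventuallyEq])⟩

lemma variance_tilted_mul_pos {t : ℝ} (ht : t ∈ interior (integrableExpSet X μ))
    (hX : ∀ c : ℝ, ¬ X =ᵐ[μ] fun _ ↦ c) : 0 < Var[X; μ.tilted (t * X ·)] := by
  have : NeZero μ := neZero_of_forall_not_ae_eq_const hX
  have ht_int : Integrable (fun ω ↦ exp (t * X ω)) μ :=
    interior_subset (s := integrableExpSet X μ) ht
  have : IsProbabilityMeasure (μ.tilted (t * X ·)) := isProbabilityMeasure_tilted ht_int
  exact (variance_nonneg _ _).lt_of_ne fun hvar ↦ hX _ <| absolutelyContinuous_tilted ht_int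
    (ae_eq_integral_of_variance_eq_zero (memLp_tilted_mul ht 2) hvar.symm)

lemma strictMono_deriv_cgf (h : ∀ t, Integrable (fun ω ↦ exp (t * X ω)) μ)
    (hX : ∀ c : ℝ, ¬ X =ᵐ[μ] fun _ ↦ c) : StrictMono (deriv (cgf X μ)) := by
  refine strictMono_of_deriv_pos fun t ↦ ?_
  have ht := mem_interior_integrableExpSet_of_forall_integrable h t
  have hvar := variance_tilted_mul ht
  rw [iteratedDeriv_succ, iteratedDeriv_one] at hvar
  exact hvar ▸ variance_tilted_mul_pos ht hX

lemma strictConvexOn_cgf (h : ∀ t, Integrable (fun ω ↦ exp (t * X ω)) μ)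
    (hX : ∀ c : ℝ, ¬ X =ᵐ[μ] fun _ ↦ c) : StrictConvexOn ℝ Set.univ (cgf X μ) :=
  (strictMono_deriv_cgf h hX).strictConvexOn_univ_of_deriv <| continuous_iff_continuousAt.2
    fun t ↦ (analyticAt_cgf (mem_interior_integrableExpSet_of_forall_integrable h t)).continuousAt

end ProbabilityTheory

theorem stmt_5_general {Ω : Type*} [MeasurableSpace Ω] (μ : Measure Ω)
    (Y : Ω → ℝ)
    (hInt : ∀ l : ℝ, Integrable (fun ω => Real.exp (l * Y ω)) μ)
    (hconst : ∀ c : ℝ, ¬ (Y =ᵐ[μ] fun _ => c)) :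
    StrictConvexOn ℝ Set.univ (fun l : ℝ => Real.log (∫ ω, Real.exp (l * Y ω) ∂μ)) ∧
    StrictMono (fun l : ℝ =>
      (∫ ω, Y ω * Real.exp (l * Y ω) ∂μ) / ∫ ω, Real.exp (l * Y ω) ∂μ) := by
  refine ⟨ProbabilityTheory.strictConvexOn_cgf hInt hconst, ?_⟩
  convert ProbabilityTheory.strictMono_deriv_cgf hInt hconst using 1
  funext l
  rw [ProbabilityTheory.deriv_cgf
    (ProbabilityTheory.mem_interior_integrableExpSet_of_forall_integrable hInt l)]
  rfl

/-- If `Y` has all exponential moments finite and is not a.s. constant, then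
`Λ(λ) = log E[e^{λY}]` is strictly convex on `ℝ`; in particular
`λ ↦ E[Y e^{λY}]/E[e^{λY}]` is strictly increasing. -/
theorem stmt_5 {Ω : Type*} [MeasurableSpace Ω] (μ : Measure Ω) [IsProbabilityMeasure μ]
    (Y : Ω → ℝ) (hY : Measurable Y)
    (hInt : ∀ l : ℝ, Integrable (fun ω => Real.exp (l * Y ω)) μ)
    (hconst : ∀ c : ℝ, ¬ (Y =ᵐ[μ] fun _ => c)) :
    StrictConvexOn ℝ Set.univ (fun l : ℝ => Real.log (∫ ω, Real.exp (l * Y ω) ∂μ)) ∧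
    StrictMono (fun l : ℝ =>
      (∫ ω, Y ω * Real.exp (l * Y ω) ∂μ) / ∫ ω, Real.exp (l * Y ω) ∂μ) :=
  stmt_5_general μ Y hInt hconst
end

section
/- Let (Γ_i)_{i∈ℕ} be a sequence of convex functions ℝ → ℝ, each differentiable, such that for every λ ∈ ℝ the series Σ_{i=1}^∞ Γ_i(λ) converges (the partial sums converge to a finite limit). Then for every λ ∈ ℝ the series Σ_{i=1}^∞ Γ_i'(λ) also converges to a finite limit. (The key bound: convexity gives Γ_i(λ) − Γ_i(λ−1) ≤ Γ_i'(λ) ≤ Γ_i(λ+1) − Γ_i(λ), so the partial sums of Γ_i'(λ) are Cauchy.) -/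
/-!
Convexity squeezes `Γ_i'(λ)` between `Γ_i(λ) - Γ_i(λ - 1)` and `Γ_i(λ + 1) - Γ_i(λ)`, and both of
these series converge. The gaps `Γ_i'(λ) - (Γ_i(λ) - Γ_i(λ - 1))` are then nonnegative and
dominated by a convergent series, so they are summable, although no `Γ_i` series need converge
absolutely.
-/

open Filter Finset Topology

theorem exists_tendsto_sum_range_of_nonneg_of_le {a b : ℕ → ℝ} (ha : ∀ i, 0 ≤ a i)
    (hab : ∀ i, a i ≤ b i) {B : ℝ}
    (hb : Tendsto (fun N => ∑ i ∈ range N, b i) atTop (𝓝 B)) :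
    ∃ A, Tendsto (fun N => ∑ i ∈ range N, a i) atTop (𝓝 A) := by
  have hb_summable : Summable b :=
    ((hasSum_iff_tendsto_nat_of_nonneg (fun i => (ha i).trans (hab i)) B).2 hb).summable
  exact ⟨_, (hb_summable.of_nonneg_of_le ha hab).hasSum.tendsto_sum_nat⟩

theorem exists_tendsto_sum_range_of_le_of_le {f g h : ℕ → ℝ} (hfg : ∀ i, f i ≤ g i)
    (hgh : ∀ i, g i ≤ h i) {F H : ℝ}
    (hf : Tendsto (fun N => ∑ i ∈ range N, f i) atTop (𝓝 F))
    (hh : Tendsto (fun N => ∑ i ∈ range N, h i) atTop (𝓝 H)) :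
    ∃ G, Tendsto (fun N => ∑ i ∈ range N, g i) atTop (𝓝 G) := by
  obtain ⟨D, hD⟩ := exists_tendsto_sum_range_of_nonneg_of_le (a := fun i => g i - f i)
    (b := fun i => h i - f i) (fun i => sub_nonneg.2 (hfg i))
    (fun i => sub_le_sub_right (hgh i) _) (by simpa only [sum_sub_distrib] using hh.sub hf)
  refine ⟨D + F, ?_⟩
  simpa only [sum_sub_distrib, sub_add_cancel] using hD.add hf

theorem ConvexOn.sub_le_deriv {f : ℝ → ℝ} (hf : ConvexOn ℝ Set.univ f) {x : ℝ}
    (hd : DifferentiableAt ℝ f x) : f x - f (x - 1) ≤ deriv f x := by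
  have h := hf.slope_le_deriv (Set.mem_univ (x - 1)) (Set.mem_univ x) (by linarith) hd
  simpa [slope_def_field] using h

theorem ConvexOn.deriv_le_sub {f : ℝ → ℝ} (hf : ConvexOn ℝ Set.univ f) {x : ℝ}
    (hd : DifferentiableAt ℝ f x) : deriv f x ≤ f (x + 1) - f x := by
  have h := hf.deriv_le_slope (Set.mem_univ x) (Set.mem_univ (x + 1)) (by linarith) hd
  simpa [slope_def_field] using h

theorem tendsto_sum_range_sub {Γ : ℕ → ℝ → ℝ} {x y X Y : ℝ}
    (hx : Tendsto (fun N => ∑ i ∈ range N, Γ i x) atTop (𝓝 X))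
    (hy : Tendsto (fun N => ∑ i ∈ range N, Γ i y) atTop (𝓝 Y)) :
    Tendsto (fun N => ∑ i ∈ range N, (Γ i x - Γ i y)) atTop (𝓝 (X - Y)) := by
  simpa only [sum_sub_distrib] using hx.sub hy

/-- If `(Γ_i)` are differentiable convex functions `ℝ → ℝ` such that
`Σ_i Γ_i(λ)` converges (partial sums converge) for every `λ`, then `Σ_i Γ_i'(λ)` also
converges for every `λ`. -/
theorem stmt_9 (Γ : ℕ → ℝ → ℝ)
    (hconv : ∀ i, ConvexOn ℝ Set.univ (Γ i))
    (hdiff : ∀ i, Differentiable ℝ (Γ i))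
    (hsum : ∀ l : ℝ, ∃ L : ℝ,
      Tendsto (fun N => ∑ i ∈ Finset.range N, Γ i l) atTop (nhds L)) :
    ∀ l : ℝ, ∃ L : ℝ,
      Tendsto (fun N => ∑ i ∈ Finset.range N, deriv (Γ i) l) atTop (nhds L) := by
  intro l
  obtain ⟨L_left, hL_left⟩ := hsum (l - 1)
  obtain ⟨L_mid, hL_mid⟩ := hsum l
  obtain ⟨L_right, hL_right⟩ := hsum (l + 1)
  exact exists_tendsto_sum_range_of_le_of_le (fun i => (hconv i).sub_le_deriv (hdiff i l))
    (fun i => (hconv i).deriv_le_sub (hdiff i l)) (tendsto_sum_range_sub hL_mid hL_left)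
    (tendsto_sum_range_sub hL_right hL_mid)
end

section
/- Let (B_i)_{i∈ℕ} be independent real random variables each with all exponential moments finite, with cumulant generating functions Γ_i. If for every λ ∈ ℝ the series Σ_{i=1}^∞ Γ_i(λ) converges to a finite limit, then Σ_{i=1}^∞ E[B_i] and Σ_{i=1}^∞ Var(B_i) both converge to finite limits, and the partial sums Σ_{i=1}^N B_i converge P-almost surely and in L²(P) to a random variable B. -/
/-!
Jensen's inequality gives `λ E[B_i] ≤ Γ_i(λ)`, so `Γ_i(1) - E[B_i]` and `Γ_i(-1) + E[B_i]` are
nonnegative with convergent sums; hence both are summable, and so is `Σ E[B_i]`. Applying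
`x² + 2 ≤ eˣ + e⁻ˣ` to `B_i - E[B_i]` bounds `Var(B_i)` by `t_i e^{t_i}`, where
`t_i = Γ_i(1) + Γ_i(-1)`, so the variances are summable too. The centred partial sums then form an
`L²`-bounded martingale, which converges almost surely, and Fatou's lemma together with the
orthogonality of the increments upgrades this to convergence in `L²`.
-/

open MeasureTheory Real Filter
open scoped ENNReal

namespace Real

lemma sq_add_two_le_exp_add_exp_neg (x : ℝ) : x ^ 2 + 2 ≤ exp x + exp (-x) := by
  have hsinh : (x / 2) ^ 2 ≤ sinh (x / 2) ^ 2 := by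
    rw [sq_le_sq, abs_sinh]
    exact self_le_sinh_iff.2 (abs_nonneg _)
  have hcosh : exp x + exp (-x) = 2 + 4 * sinh (x / 2) ^ 2 := by
    have := cosh_two_mul (x / 2)
    rw [mul_div_cancel₀ x two_ne_zero, cosh_eq, cosh_sq] at this
    linarith
  linarith

lemma exp_sub_one_le_mul_exp (x : ℝ) : exp x - 1 ≤ x * exp x := by
  have h := mul_le_mul_of_nonneg_right (add_one_le_exp (-x)) (exp_pos x).le
  rw [← exp_add, neg_add_cancel, exp_zero] at h
  linarith

lemma exp_add_exp_sub_two_le {a b : ℝ} (ha : 0 ≤ a) (hb : 0 ≤ b) :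
    exp a + exp b - 2 ≤ (a + b) * exp (a + b) := by
  have hprod : 0 ≤ (exp a - 1) * (exp b - 1) :=
    mul_nonneg (by linarith [one_le_exp ha]) (by linarith [one_le_exp hb])
  have := exp_sub_one_le_mul_exp (a + b)
  rw [exp_add] at this ⊢
  nlinarith

end Real

section Series

variable {m a b : ℕ → ℝ} {A B : ℝ}

lemma hasSum_add_of_le_of_neg_le (ha : ∀ i, m i ≤ a i) (hb : ∀ i, -m i ≤ b i)
    (hA : Tendsto (fun N => ∑ i ∈ Finset.range N, a i) atTop (nhds A))
    (hB : Tendsto (fun N => ∑ i ∈ Finset.range N, b i) atTop (nhds B)) :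
    HasSum (fun i => a i + b i) (A + B) := by
  refine (hasSum_iff_tendsto_nat_of_nonneg (fun i => by linarith [ha i, hb i]) _).2 ?_
  simpa only [Finset.sum_add_distrib] using hA.add hB

lemma exists_tendsto_sum_range_of_le_of_neg_le (ha : ∀ i, m i ≤ a i) (hb : ∀ i, -m i ≤ b i)
    (hA : Tendsto (fun N => ∑ i ∈ Finset.range N, a i) atTop (nhds A))
    (hB : Tendsto (fun N => ∑ i ∈ Finset.range N, b i) atTop (nhds B)) :
    ∃ M, Tendsto (fun N => ∑ i ∈ Finset.range N, m i) atTop (nhds M) := by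
  have hgap : Summable fun i => a i - m i :=
    (hasSum_add_of_le_of_neg_le ha hb hA hB).summable.of_nonneg_of_le
      (fun i => by linarith [ha i]) (fun i => by linarith [hb i])
  refine ⟨A - ∑' i, (a i - m i), ?_⟩
  simpa only [← Finset.sum_sub_distrib, sub_sub_cancel] using hA.sub hgap.hasSum.tendsto_sum_nat

end Series

lemma eLpNorm_sub_le_of_ae_tendsto {Ω E : Type*} [MeasurableSpace Ω] {μ : Measure Ω}
    [NormedAddCommGroup E] {p : ℝ≥0∞} {f : ℕ → Ω → E} {g h : Ω → E} {b : ℝ≥0∞}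
    (hf : ∀ n, AEStronglyMeasurable (f n) μ) (hh : AEStronglyMeasurable h μ)
    (hlim : ∀ᵐ ω ∂μ, Tendsto (fun n => f n ω) atTop (nhds (g ω)))
    (hb : ∀ᶠ n in atTop, eLpNorm (f n - h) p μ ≤ b) :
    eLpNorm (g - h) p μ ≤ b :=
  (Lp.eLpNorm_lim_le_liminf_eLpNorm (fun n => (hf n).sub hh) (g - h)
    (by filter_upwards [hlim] with ω hω using hω.sub tendsto_const_nhds)).trans
    (liminf_le_of_frequently_le' hb.frequently)

lemma eLpNorm_add_const_le {Ω E : Type*} [MeasurableSpace Ω] {μ : Measure Ω}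
    [IsProbabilityMeasure μ] [NormedAddCommGroup E] {p : ℝ≥0∞} {f : Ω → E}
    (hf : AEStronglyMeasurable f μ) (c : E) (hp : 1 ≤ p) :
    eLpNorm (fun ω => f ω + c) p μ ≤ eLpNorm f p μ + ‖c‖ₑ := by
  refine (eLpNorm_add_le hf aestronglyMeasurable_const hp).trans_eq ?_
  rw [eLpNorm_const _ (one_pos.trans_le hp).ne' (NeZero.ne μ), measure_univ, ENNReal.one_rpow,
    mul_one]

namespace ProbabilityTheory

section ExpMoments

variable {Ω : Type*} [MeasurableSpace Ω] {μ : Measure Ω} {X : Ω → ℝ}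

lemma integrable_of_integrable_exp_mul_one
    (hpos : Integrable (fun ω => exp (1 * X ω)) μ) (hneg : Integrable (fun ω => exp (-1 * X ω)) μ) :
    Integrable X μ := by
  simpa using integrable_pow_of_integrable_exp_mul one_ne_zero hpos hneg 1

lemma memLp_two_of_integrable_exp_mul_one
    (hpos : Integrable (fun ω => exp (1 * X ω)) μ) (hneg : Integrable (fun ω => exp (-1 * X ω)) μ) :
    MemLp X 2 μ :=
  (memLp_two_iff_integrable_sq
    (aemeasurable_of_integrable_exp_mul (by norm_num : (1 : ℝ) ≠ -1) hpos hneg).aestronglyMeasurable).2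
    (integrable_pow_of_integrable_exp_mul one_ne_zero hpos hneg 2)

variable [IsProbabilityMeasure μ]

lemma mul_integral_le_cgf {t : ℝ} (hX : Integrable X μ)
    (ht : Integrable (fun ω => exp (t * X ω)) μ) : t * μ[X] ≤ cgf X μ t := by
  rw [cgf, le_log_iff_exp_le (mgf_pos ht), ← integral_const_mul]
  exact convexOn_exp.map_integral_le continuous_exp.continuousOn isClosed_univ
    (ae_of_all _ fun _ => Set.mem_univ _) (hX.const_mul t) ht

lemma cgf_add_cgf_neg_nonneg
    (hpos : Integrable (fun ω => exp (1 * X ω)) μ) (hneg : Integrable (fun ω => exp (-1 * X ω)) μ) :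
    0 ≤ cgf X μ 1 + cgf X μ (-1) := by
  have hX := integrable_of_integrable_exp_mul_one hpos hneg
  linarith [mul_integral_le_cgf hX hpos, mul_integral_le_cgf hX hneg]

lemma variance_le_exp_add_exp_sub_two
    (hpos : Integrable (fun ω => exp (1 * X ω)) μ) (hneg : Integrable (fun ω => exp (-1 * X ω)) μ) :
    Var[X; μ] ≤ exp (cgf X μ 1 - μ[X]) + exp (cgf X μ (-1) + μ[X]) - 2 := by
  set m := μ[X]
  have hbound : ∀ ω, (X ω - m) ^ 2 ≤ exp (-m) * exp (1 * X ω) + exp m * exp (-1 * X ω) - 2 := by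
    intro ω
    have := sq_add_two_le_exp_add_exp_neg (X ω - m)
    rw [← exp_add, ← exp_add]
    convert sub_le_sub_right this 2 using 3 <;> ring_nf
  have hint₁ : Integrable (fun ω => exp (-m) * exp (1 * X ω)) μ := hpos.const_mul _
  have hint₂ : Integrable (fun ω => exp m * exp (-1 * X ω)) μ := hneg.const_mul _
  have hint₁₂ : Integrable (fun ω => exp (-m) * exp (1 * X ω) + exp m * exp (-1 * X ω)) μ :=
    hint₁.add hint₂
  calc Var[X; μ] = ∫ ω, (X ω - m) ^ 2 ∂μ :=
        variance_eq_integral (aemeasurable_of_integrable_exp_mul (by norm_num : (1 : ℝ) ≠ -1) hpos hneg)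
    _ ≤ ∫ ω, (exp (-m) * exp (1 * X ω) + exp m * exp (-1 * X ω) - 2) ∂μ :=
        integral_mono ((memLp_two_of_integrable_exp_mul_one hpos hneg).sub
          (memLp_const m)).integrable_sq (hint₁₂.sub (integrable_const 2)) hbound
    _ = exp (-m) * mgf X μ 1 + exp m * mgf X μ (-1) - 2 := by
        rw [integral_sub hint₁₂ (integrable_const 2), integral_add hint₁ hint₂, integral_const_mul,
          integral_const_mul, integral_const, probReal_univ, one_smul, mgf, mgf]
    _ = exp (cgf X μ 1 - m) + exp (cgf X μ (-1) + m) - 2 := by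
        rw [← exp_cgf hpos, ← exp_cgf hneg, ← exp_add, ← exp_add]
        ring_nf

lemma variance_le_cgf_add_cgf_neg_mul_exp
    (hpos : Integrable (fun ω => exp (1 * X ω)) μ) (hneg : Integrable (fun ω => exp (-1 * X ω)) μ) :
    Var[X; μ] ≤ (cgf X μ 1 + cgf X μ (-1)) * exp (cgf X μ 1 + cgf X μ (-1)) := by
  have hX := integrable_of_integrable_exp_mul_one hpos hneg
  have h1 := mul_integral_le_cgf hX hpos
  have h2 := mul_integral_le_cgf hX hneg
  have := exp_add_exp_sub_two_le (a := cgf X μ 1 - μ[X]) (b := cgf X μ (-1) + μ[X])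
    (by linarith) (by linarith)
  have hsum : cgf X μ 1 - μ[X] + (cgf X μ (-1) + μ[X]) = cgf X μ 1 + cgf X μ (-1) := by ring
  rw [hsum] at this
  exact (variance_le_exp_add_exp_sub_two hpos hneg).trans this

end ExpMoments

variable {Ω : Type*} [MeasurableSpace Ω] {μ : Measure Ω} [IsProbabilityMeasure μ]

lemma eLpNorm_two_eq_sqrt_variance {Y : Ω → ℝ} (hY : MemLp Y 2 μ) (h0 : μ[Y] = 0) :
    eLpNorm Y 2 μ = ENNReal.ofReal √Var[Y; μ] := by
  have hevar : evariance Y μ = ∫⁻ ω, ‖Y ω‖ₑ ^ (2 : ℝ) ∂μ := by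
    simp only [evariance, h0, sub_zero, ENNReal.rpow_two]
  rw [sqrt_eq_rpow, ← ENNReal.ofReal_rpow_of_nonneg (variance_nonneg Y μ) (by norm_num),
    hY.ofReal_variance_eq, hevar,
    eLpNorm_eq_lintegral_rpow_enorm_toReal two_ne_zero ENNReal.ofNat_ne_top]
  norm_num

lemma iIndepFun.eLpNorm_sum_eq_sqrt_sum_variance {ι : Type*} {X : ι → Ω → ℝ}
    (hindep : iIndepFun X μ) (hL2 : ∀ i, MemLp (X i) 2 μ) (hmean : ∀ i, μ[X i] = 0)
    (s : Finset ι) :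
    eLpNorm (∑ i ∈ s, X i) 2 μ = ENNReal.ofReal √(∑ i ∈ s, Var[X i; μ]) := by
  have hmean_sum : μ[∑ i ∈ s, X i] = 0 := by
    simp only [Finset.sum_apply]
    rw [integral_finsetSum s fun i _ => (hL2 i).integrable one_le_two]
    exact Finset.sum_eq_zero fun i _ => hmean i
  rw [eLpNorm_two_eq_sqrt_variance (memLp_finsetSum' s fun i _ => hL2 i) hmean_sum,
    IndepFun.variance_sum (fun i _ => hL2 i) fun i _ j _ hij => hindep.indepFun hij]

variable {X : ℕ → Ω → ℝ}

lemma summable_variance_of_summable_cgf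
    (hpos : ∀ i, Integrable (fun ω => exp (1 * X i ω)) μ)
    (hneg : ∀ i, Integrable (fun ω => exp (-1 * X i ω)) μ)
    (hsum : Summable fun i => cgf (X i) μ 1 + cgf (X i) μ (-1)) :
    Summable fun i => Var[X i; μ] := by
  have ht : ∀ i, 0 ≤ cgf (X i) μ 1 + cgf (X i) μ (-1) := fun i =>
    cgf_add_cgf_neg_nonneg (hpos i) (hneg i)
  refine (hsum.mul_right (exp (∑' i, (cgf (X i) μ 1 + cgf (X i) μ (-1))))).of_nonneg_of_le
    (fun i => variance_nonneg _ _) fun i => ?_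
  exact (variance_le_cgf_add_cgf_neg_mul_exp (hpos i) (hneg i)).trans
    (mul_le_mul_of_nonneg_left (exp_le_exp.2 (hsum.le_tsum i fun j _ => ht j)) (ht i))

lemma iIndepFun.martingale_sum_range_succ (hX : ∀ i, StronglyMeasurable (X i))
    (hindep : iIndepFun X μ) (hint : ∀ i, Integrable (X i) μ) (hmean : ∀ i, μ[X i] = 0) :
    Martingale (fun n => ∑ i ∈ Finset.range (n + 1), X i) (Filtration.natural X hX) μ := by
  refine martingale_of_condExp_sub_eq_zero_nat (fun n => ?_)
    (fun n => integrable_finsetSum' _ fun i _ => hint i) (fun n => ?_)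
  · refine Finset.stronglyMeasurable_sum _ fun i hi => ?_
    exact (Filtration.stronglyAdapted_natural hX i).mono
      ((Filtration.natural X hX).mono (Nat.lt_succ_iff.mp (Finset.mem_range.mp hi)))
  · rw [Finset.sum_range_succ _ (n + 1), add_sub_cancel_left]
    filter_upwards [hindep.condExp_natural_ae_eq_of_lt hX n.lt_succ_self] with ω hω
    rw [hω, hmean, Pi.zero_apply]

lemma iIndepFun.eLpNorm_sum_Ico_le_sqrt_tsum (hindep : iIndepFun X μ)
    (hL2 : ∀ i, MemLp (X i) 2 μ) (hmean : ∀ i, μ[X i] = 0)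
    (hvar : Summable fun i => Var[X i; μ]) {k n : ℕ} (hkn : k ≤ n) :
    eLpNorm ((∑ i ∈ Finset.range n, X i) - ∑ i ∈ Finset.range k, X i) 2 μ
      ≤ ENNReal.ofReal √(∑' i, Var[X (i + k); μ]) := by
  rw [← Finset.sum_Ico_eq_sub X hkn, hindep.eLpNorm_sum_eq_sqrt_sum_variance hL2 hmean,
    Finset.sum_Ico_eq_sum_range]
  gcongr
  simp only [add_comm k]
  exact ((summable_nat_add_iff k).2 hvar).sum_le_tsum _ fun i _ => variance_nonneg _ _

/-- **Kolmogorov's one-series theorem.** -/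
theorem iIndepFun.exists_tendsto_sum_of_summable_variance (hmeas : ∀ i, Measurable (X i))
    (hindep : iIndepFun X μ) (hL2 : ∀ i, MemLp (X i) 2 μ) (hmean : ∀ i, μ[X i] = 0)
    (hvar : Summable fun i => Var[X i; μ]) :
    ∃ Y : Ω → ℝ,
      (∀ᵐ ω ∂μ, Tendsto (fun n => ∑ i ∈ Finset.range n, X i ω) atTop (nhds (Y ω))) ∧
      Tendsto (fun n => eLpNorm (fun ω => (∑ i ∈ Finset.range n, X i ω) - Y ω) 2 μ)
        atTop (nhds 0) := by
  set S : ℕ → Ω → ℝ := fun n => ∑ i ∈ Finset.range n, X i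
  have hS : ∀ n ω, S n ω = ∑ i ∈ Finset.range n, X i ω := fun n ω => Finset.sum_apply _ _ _
  have hSmem : ∀ n, MemLp (S n) 2 μ := fun n => memLp_finsetSum' _ fun i _ => hL2 i
  have hbdd : ∀ n, eLpNorm (S (n + 1)) 1 μ ≤ (√(∑' i, Var[X i; μ])).toNNReal := by
    intro n
    have := hindep.eLpNorm_sum_Ico_le_sqrt_tsum hL2 hmean hvar (Nat.zero_le (n + 1))
    simp only [Finset.range_zero, Finset.sum_empty, sub_zero, add_zero] at this
    exact (eLpNorm_le_eLpNorm_of_exponent_le one_le_two (hSmem _).aestronglyMeasurable).trans this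
  have hconv : ∀ᵐ ω ∂μ, ∃ c, Tendsto (fun n => S n ω) atTop (nhds c) := by
    filter_upwards [(hindep.martingale_sum_range_succ (fun i => (hmeas i).stronglyMeasurable)
      (fun i => (hL2 i).integrable one_le_two) hmean).submartingale.exists_ae_tendsto_of_bdd hbdd]
      with ω ⟨c, hc⟩
    exact ⟨c, (tendsto_add_atTop_iff_nat 1).1 hc⟩
  set Y : Ω → ℝ := fun ω => limUnder atTop fun n => S n ω
  have hae : ∀ᵐ ω ∂μ, Tendsto (fun n => S n ω) atTop (nhds (Y ω)) := by
    filter_upwards [hconv] with ω hω using tendsto_nhds_limUnder hω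
  have hL2lim : ∀ n, eLpNorm (Y - S n) 2 μ ≤ ENNReal.ofReal √(∑' i, Var[X (i + n); μ]) :=
    fun n => eLpNorm_sub_le_of_ae_tendsto (fun k => (hSmem k).aestronglyMeasurable)
      (hSmem n).aestronglyMeasurable hae ((eventually_ge_atTop n).mono fun k hk =>
        hindep.eLpNorm_sum_Ico_le_sqrt_tsum hL2 hmean hvar hk)
  have htail : Tendsto (fun n => ENNReal.ofReal √(∑' i, Var[X (i + n); μ])) atTop (nhds 0) := by
    simpa using ENNReal.tendsto_ofReal
      ((continuous_sqrt.tendsto 0).comp (tendsto_sum_nat_add fun i => Var[X i; μ]))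
  refine ⟨Y, by simpa only [hS] using hae, ?_⟩
  refine tendsto_of_tendsto_of_tendsto_of_le_of_le tendsto_const_nhds htail (fun n => zero_le)
    fun n => ?_
  have h := hL2lim n
  rw [eLpNorm_sub_comm] at h
  simpa only [Pi.sub_def, hS] using h

/-- **Kolmogorov's two-series theorem**, convergence part. -/
theorem iIndepFun.exists_tendsto_sum_of_tendsto_sum_integral (hmeas : ∀ i, Measurable (X i))
    (hindep : iIndepFun X μ) (hL2 : ∀ i, MemLp (X i) 2 μ) {M : ℝ}
    (hmean : Tendsto (fun n => ∑ i ∈ Finset.range n, μ[X i]) atTop (nhds M))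
    (hvar : Summable fun i => Var[X i; μ]) :
    ∃ Y : Ω → ℝ,
      (∀ᵐ ω ∂μ, Tendsto (fun n => ∑ i ∈ Finset.range n, X i ω) atTop (nhds (Y ω))) ∧
      Tendsto (fun n => eLpNorm (fun ω => (∑ i ∈ Finset.range n, X i ω) - Y ω) 2 μ)
        atTop (nhds 0) := by
  set c : ℕ → ℝ := fun i => μ[X i]
  set Z : ℕ → Ω → ℝ := fun i ω => X i ω - c i
  have hZ : ∀ n ω, ∑ i ∈ Finset.range n, X i ω
      = ∑ i ∈ Finset.range n, Z i ω + ∑ i ∈ Finset.range n, c i := by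
    simp [Z, Finset.sum_sub_distrib]
  have hZindep : iIndepFun Z μ :=
    hindep.comp (fun i y => y - c i) fun i => measurable_id.sub_const _
  have hZmean : ∀ i, μ[Z i] = 0 := fun i => by
    simp [Z, c, integral_sub ((hL2 i).integrable one_le_two) (integrable_const _)]
  have hZvar : Summable fun i => Var[Z i; μ] := by
    simpa only [Z, variance_sub_const (hmeas _).aestronglyMeasurable] using hvar
  obtain ⟨Y, hae, hL2lim⟩ := hZindep.exists_tendsto_sum_of_summable_variance
    (fun i => (hmeas i).sub_const _) (fun i => (hL2 i).sub (memLp_const _)) hZmean hZvar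
  have hZsum : ∀ n, Measurable fun ω => ∑ i ∈ Finset.range n, Z i ω := fun n =>
    Finset.measurable_sum _ fun i _ => (hmeas i).sub_const _
  have hYm : AEStronglyMeasurable Y μ :=
    aestronglyMeasurable_of_tendsto_ae atTop (fun n => (hZsum n).aestronglyMeasurable) hae
  refine ⟨fun ω => Y ω + M, ?_, ?_⟩
  · filter_upwards [hae] with ω hω
    simpa only [hZ] using hω.add hmean
  · have hbound : ∀ n, eLpNorm (fun ω => (∑ i ∈ Finset.range n, X i ω) - (Y ω + M)) 2 μ
        ≤ eLpNorm (fun ω => (∑ i ∈ Finset.range n, Z i ω) - Y ω) 2 μ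
          + ‖∑ i ∈ Finset.range n, c i - M‖ₑ := fun n => by
      convert eLpNorm_add_const_le (f := fun ω => (∑ i ∈ Finset.range n, Z i ω) - Y ω)
        ((hZsum n).aestronglyMeasurable.sub hYm)
        (∑ i ∈ Finset.range n, c i - M) one_le_two using 2
      funext ω
      rw [hZ]
      ring
    have hconst : Tendsto (fun n => ‖∑ i ∈ Finset.range n, c i - M‖ₑ) atTop (nhds 0) := by
      simpa using (hmean.sub_const M).enorm
    exact tendsto_of_tendsto_of_tendsto_of_le_of_le tendsto_const_nhds
      (by simpa only [add_zero] using hL2lim.add hconst) (fun n => zero_le) hbound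

end ProbabilityTheory

open ProbabilityTheory

/-- For independent `B_i` with all exponential moments finite and cumulant
generating functions `Γ_i`, if `Σ_i Γ_i(λ)` converges for every `λ`, then `Σ_i E[B_i]` and
`Σ_i Var(B_i)` converge, and the partial sums `Σ_{i<N} B_i` converge a.s. and in `L²` to a
random variable `B`. -/
theorem stmt_11 {Ω : Type*} [MeasurableSpace Ω] (μ : Measure Ω) [IsProbabilityMeasure μ]
    (B : ℕ → Ω → ℝ) (hmeas : ∀ i, Measurable (B i))
    (hindep : ProbabilityTheory.iIndepFun B μ)
    (hInt : ∀ i, ∀ l : ℝ, Integrable (fun ω => Real.exp (l * B i ω)) μ)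
    (hsum : ∀ l : ℝ, ∃ L : ℝ,
      Tendsto (fun N => ∑ i ∈ Finset.range N,
        Real.log (∫ ω, Real.exp (l * B i ω) ∂μ)) atTop (nhds L)) :
    (∃ m : ℝ, Tendsto (fun N => ∑ i ∈ Finset.range N, ∫ ω, B i ω ∂μ) atTop (nhds m)) ∧
    (∃ v : ℝ, Tendsto (fun N => ∑ i ∈ Finset.range N,
        ∫ ω, (B i ω - ∫ ω', B i ω' ∂μ) ^ 2 ∂μ) atTop (nhds v)) ∧
    ∃ Blim : Ω → ℝ,
      (∀ᵐ ω ∂μ, Tendsto (fun N => ∑ i ∈ Finset.range N, B i ω) atTop (nhds (Blim ω))) ∧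
      Tendsto (fun N =>
        eLpNorm (fun ω => (∑ i ∈ Finset.range N, B i ω) - Blim ω) 2 μ) atTop (nhds 0) := by
  have hBint : ∀ i, Integrable (B i) μ := fun i =>
    integrable_of_integrable_exp_mul_one (hInt i 1) (hInt i (-1))
  have hmean_le : ∀ i, μ[B i] ≤ cgf (B i) μ 1 := fun i => by
    simpa using mul_integral_le_cgf (hBint i) (hInt i 1)
  have hneg_mean_le : ∀ i, -μ[B i] ≤ cgf (B i) μ (-1) := fun i => by
    simpa using mul_integral_le_cgf (hBint i) (hInt i (-1))
  -- `hsum l` is about the partial sums of `cgf (B i) μ l`, which unfolds to `log (mgf (B i) μ l)`.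
  obtain ⟨L₁, hL₁⟩ := hsum 1
  obtain ⟨L₂, hL₂⟩ := hsum (-1)
  obtain ⟨m, hm⟩ := exists_tendsto_sum_range_of_le_of_neg_le hmean_le hneg_mean_le hL₁ hL₂
  have hvar : Summable fun i => Var[B i; μ] :=
    summable_variance_of_summable_cgf (fun i => hInt i 1) (fun i => hInt i (-1))
      (hasSum_add_of_le_of_neg_le hmean_le hneg_mean_le hL₁ hL₂).summable
  refine ⟨⟨m, hm⟩, ⟨∑' i, Var[B i; μ], ?_⟩, hindep.exists_tendsto_sum_of_tendsto_sum_integral hmeas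
    (fun i => memLp_two_of_integrable_exp_mul_one (hInt i 1) (hInt i (-1))) hm hvar⟩
  simpa only [variance_eq_integral (hmeas _).aemeasurable] using hvar.hasSum.tendsto_sum_nat
end

section
/- Let I: ℝ → [0,∞] be lower semicontinuous with compact sublevel sets, I(y) = 0 if and only if y = 0, and suppose there is δ > 0 with sup_y(εy − I(y)) < ∞ for |ε| < δ. For ε ∈ (−δ,δ) let l^ε = inf{y : y ∈ argmax_y(εy − I(y))} and u^ε = sup{y : y ∈ argmax_y(εy − I(y))}. Then l^ε → 0 and u^ε → 0 as ε → 0. -/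
open Filter

private lemma ennreal_ecoe_eq (c : ENNReal) (hc : c ≠ ⊤) :
    (c : EReal) = ((c.toReal : ℝ) : EReal) := by
  rw [← EReal.toReal_coe_ennreal (x := c)]
  rw [EReal.coe_toReal]
  · exact fun h => hc (EReal.coe_ennreal_eq_top_iff.1 h)
  · intro h
    have h2 := EReal.coe_ennreal_nonneg c
    rw [h] at h2
    simp at h2

private lemma sub_ecoe (a : ℝ) (c : ENNReal) (hc : c ≠ ⊤) :
    ((a : ℝ) : EReal) - (c : EReal) = ((a - c.toReal : ℝ) : EReal) := by
  rw [ennreal_ecoe_eq c hc, ← EReal.coe_sub]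

/-- Let `I : ℝ → [0,∞]` be a good rate function (lower semicontinuous with
compact sublevel sets), vanishing only at `0`, with Legendre transform finite on `(−δ,δ)`.
For `ε ∈ (−δ,δ)` let `l^ε` and `u^ε` be the infimum and supremum of the argmax set of
`y ↦ εy − I(y)`. Then `l^ε → 0` and `u^ε → 0` as `ε → 0`. -/
theorem stmt_14 (I : ℝ → ENNReal) (δ : ℝ) (hδ : 0 < δ)
    (hlsc : LowerSemicontinuous I)
    (hcomp : ∀ s : ℝ, IsCompact {y : ℝ | I y ≤ ENNReal.ofReal s})
    (hzero : ∀ y : ℝ, I y = 0 ↔ y = 0)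
    (hΓ : ∀ ε : ℝ, |ε| < δ →
      (⨆ y : ℝ, (((ε * y : ℝ) : EReal) - (I y : EReal))) < ⊤) :
    Tendsto (fun ε : ℝ => sInf {y : ℝ | ∀ z : ℝ,
        ((ε * z : ℝ) : EReal) - (I z : EReal) ≤ ((ε * y : ℝ) : EReal) - (I y : EReal)})
      (nhdsWithin 0 (Set.Ioo (-δ) δ)) (nhds 0) ∧
    Tendsto (fun ε : ℝ => sSup {y : ℝ | ∀ z : ℝ,
        ((ε * z : ℝ) : EReal) - (I z : EReal) ≤ ((ε * y : ℝ) : EReal) - (I y : EReal)})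
      (nhdsWithin 0 (Set.Ioo (-δ) δ)) (nhds 0) := by
  set A : ℝ → Set ℝ := fun ε => {y : ℝ | ∀ z : ℝ,
      ((ε * z : ℝ) : EReal) - (I z : EReal) ≤ ((ε * y : ℝ) : EReal) - (I y : EReal)} with hA
  have hI0 : I 0 = 0 := (hzero 0).2 rfl
  -- membership forces finiteness and I y ≤ ε y
  have hmem : ∀ ε y : ℝ, y ∈ A ε → I y ≠ ⊤ ∧ (I y).toReal ≤ ε * y := by
    intro ε y hy
    have h0 := hy 0
    rw [hI0] at h0
    simp only [mul_zero, ENNReal.coe_zero] at h0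
    have h0' : (0 : EReal) ≤ ((ε * y : ℝ) : EReal) - (I y : EReal) := by
      calc (0 : EReal) = ((0 : ℝ) : EReal) - ((0 : ENNReal) : EReal) := by simp
        _ ≤ _ := h0
    have hne : I y ≠ ⊤ := by
      intro h
      rw [h, EReal.coe_ennreal_top, EReal.sub_top] at h0'
      exact absurd h0' (by simp)
    refine ⟨hne, ?_⟩
    rw [sub_ecoe _ _ hne] at h0'
    have : ((0 : ℝ) : EReal) ≤ ((ε * y - (I y).toReal : ℝ) : EReal) := by
      simpa using h0'
    have := EReal.coe_le_coe_iff.1 this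
    linarith
  -- Legendre bound
  have key : ∀ a : ℝ, |a| < δ → ∀ y : ℝ, I y ≠ ⊤ →
      a * y - (I y).toReal ≤ (⨆ z : ℝ, (((a * z : ℝ) : EReal) - (I z : EReal))).toReal := by
    intro a ha y hy
    have h1 : ((a * y : ℝ) : EReal) - (I y : EReal) ≤
        ⨆ z : ℝ, (((a * z : ℝ) : EReal) - (I z : EReal)) :=
      le_iSup (fun z => (((a * z : ℝ) : EReal) - (I z : EReal))) y
    have h2 := EReal.le_coe_toReal (ne_of_lt (hΓ a ha))
    have h3 := le_trans h1 h2
    rw [sub_ecoe _ _ hy] at h3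
    exact EReal.coe_le_coe_iff.1 h3
  -- the crucial inclusion
  have main : ∀ η : ℝ, 0 < η → ∃ ε₀ : ℝ, 0 < ε₀ ∧ ∀ ε : ℝ, |ε| < ε₀ →
      A ε ⊆ Set.Icc (-η) η := by
    intro η hη
    -- coercivity constants
    set C : ℝ := max (⨆ z : ℝ, ((((δ/2) * z : ℝ) : EReal) - (I z : EReal))).toReal
      (⨆ z : ℝ, ((((-(δ/2)) * z : ℝ) : EReal) - (I z : EReal))).toReal with hC
    have habs1 : |δ/2| < δ := by rw [abs_of_pos (by linarith)]; linarith
    have habs2 : |(-(δ/2))| < δ := by rw [abs_neg, abs_of_pos (by linarith)]; linarith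
    set M : ℝ := max 1 (4*C/δ) with hM
    have hMpos : 0 < M := lt_of_lt_of_le one_pos (le_max_left _ _)
    -- bound: for |ε| ≤ δ/4, y ∈ A ε → |y| ≤ M
    have hbound : ∀ ε : ℝ, |ε| ≤ δ/4 → ∀ y : ℝ, y ∈ A ε → |y| ≤ M := by
      intro ε hε y hy
      obtain ⟨hne, ht⟩ := hmem ε y hy
      have htnn : 0 ≤ (I y).toReal := ENNReal.toReal_nonneg
      have hty : (I y).toReal ≤ |ε| * |y| := le_trans ht (by
        calc ε * y ≤ |ε * y| := le_abs_self _
          _ = |ε| * |y| := abs_mul _ _)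
      have hty' : (I y).toReal ≤ (δ/4) * |y| :=
        le_trans hty (mul_le_mul_of_nonneg_right hε (abs_nonneg y))
      have hcoer : (δ/2) * |y| ≤ (I y).toReal + C := by
        rcases abs_cases y with ⟨h, _⟩ | ⟨h, _⟩
        · rw [h]
          have := key (δ/2) habs1 y hne
          have hle : (⨆ z : ℝ, ((((δ/2) * z : ℝ) : EReal) - (I z : EReal))).toReal ≤ C :=
            le_max_left _ _
          linarith
        · have := key (-(δ/2)) habs2 y hne
          have hle : (⨆ z : ℝ, ((((-(δ/2)) * z : ℝ) : EReal) - (I z : EReal))).toReal ≤ C :=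
            le_max_right _ _
          have : -(δ/2) * y - (I y).toReal ≤ C := le_trans this hle
          rw [h]; nlinarith
      have h4 : (δ/4) * |y| ≤ C := by linarith
      have : |y| ≤ 4*C/δ := by
        rw [le_div_iff₀ hδ]
        linarith
      exact le_trans this (le_max_right _ _)
    -- small sublevel sets are near zero
    have hm : ∃ m : ℝ, 0 < m ∧ ∀ y : ℝ, I y ≤ ENNReal.ofReal m → |y| < η := by
      by_contra hcon
      push_neg at hcon
      set t : ℕ → Set ℝ := fun n =>
        {y : ℝ | I y ≤ ENNReal.ofReal (1/(n+1))} ∩ {y : ℝ | η ≤ |y|} with hT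
      have hclosed_ann : IsClosed {y : ℝ | η ≤ |y|} :=
        isClosed_le continuous_const continuous_abs
      have htc : ∀ n, IsCompact (t n) := fun n =>
        (hcomp (1/(n+1))).inter_right hclosed_ann
      have htcl : ∀ n, IsClosed (t n) := fun n => (htc n).isClosed
      have htd : ∀ n, t (n+1) ⊆ t n := by
        intro n y hy
        refine ⟨le_trans hy.1 (ENNReal.ofReal_le_ofReal ?_), hy.2⟩
        have h1 : (0:ℝ) < (n:ℝ) + 1 := by positivity
        rw [div_le_div_iff₀ (by positivity) h1]
        push_cast; linarith
      have htn : ∀ n, (t n).Nonempty := by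
        intro n
        obtain ⟨y, hy1, hy2⟩ := hcon (1/(n+1)) (by positivity)
        exact ⟨y, hy1, hy2⟩
      obtain ⟨y, hy⟩ := IsCompact.nonempty_iInter_of_sequence_nonempty_isCompact_isClosed
        t htd htn (htc 0) htcl
      simp only [Set.mem_iInter] at hy
      have hy0 : I y = 0 := by
        by_contra h
        have hpos : 0 < I y := pos_iff_ne_zero.2 h
        obtain ⟨n, hn⟩ := ENNReal.exists_inv_nat_lt (ne_of_gt hpos)
        have := (hy n).1
        have h2 : ENNReal.ofReal (1/(n+1)) ≤ ((n:ENNReal))⁻¹ := by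
          rcases Nat.eq_zero_or_pos n with h0 | h0
          · subst h0; simp
          · have hn0 : (0:ℝ) < (n:ℝ) := by exact_mod_cast h0
            have heq : ENNReal.ofReal ((n:ℝ)⁻¹) = ((n:ENNReal))⁻¹ := by
              rw [ENNReal.ofReal_inv_of_pos hn0, ENNReal.ofReal_natCast]
            rw [← heq]
            apply ENNReal.ofReal_le_ofReal
            rw [div_le_iff₀ (by positivity), inv_mul_eq_div, le_div_iff₀ hn0]
            nlinarith
        exact absurd (lt_of_le_of_lt (le_trans this h2) hn) (lt_irrefl _)
      have : y = 0 := (hzero y).1 hy0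
      have := (hy 0).2
      rw [‹y = 0›] at this
      simp at this
      linarith
    obtain ⟨m, hmpos, hmprop⟩ := hm
    refine ⟨min (δ/4) (m/M), lt_min (by linarith) (by positivity), ?_⟩
    intro ε hε y hy
    have hε1 : |ε| ≤ δ/4 := le_of_lt (lt_of_lt_of_le hε (min_le_left _ _))
    have hε2 : |ε| < m/M := lt_of_lt_of_le hε (min_le_right _ _)
    have hyM : |y| ≤ M := hbound ε hε1 y hy
    obtain ⟨hne, ht⟩ := hmem ε y hy
    have h1 : (I y).toReal < m := by
      have h2 : ε * y ≤ |ε| * |y| := le_trans (le_abs_self _) (le_of_eq (abs_mul _ _))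
      have h3 : |ε| * |y| ≤ |ε| * M := mul_le_mul_of_nonneg_left hyM (abs_nonneg ε)
      have h4 : |ε| * M < m := by
        have h5 := mul_lt_mul_of_pos_right hε2 hMpos
        rwa [div_mul_cancel₀ m (ne_of_gt hMpos)] at h5
      linarith
    have h5 : I y ≤ ENNReal.ofReal m :=
      le_of_lt ((ENNReal.lt_ofReal_iff_toReal_lt hne).2 h1)
    have := hmprop y h5
    rw [abs_lt] at this
    exact ⟨le_of_lt this.1, le_of_lt this.2⟩
  constructor
  · rw [Metric.tendsto_nhdsWithin_nhds]
    intro η hη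
    obtain ⟨ε₀, hε₀, hsub⟩ := main (η/2) (by linarith)
    refine ⟨ε₀, hε₀, ?_⟩
    intro ε _ hd
    rw [Real.dist_eq, sub_zero] at hd ⊢
    have hsub' := hsub ε hd
    by_cases hne : (A ε).Nonempty
    · have bdd : BddBelow (A ε) := ⟨-(η/2), fun a ha => (hsub' ha).1⟩
      have h1 : -(η/2) ≤ sInf (A ε) := le_csInf hne fun a ha => (hsub' ha).1
      obtain ⟨a, ha⟩ := hne
      have h2 : sInf (A ε) ≤ η/2 := le_trans (csInf_le bdd ha) (hsub' ha).2
      rw [abs_lt]; constructor <;> linarith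
    · rw [Set.not_nonempty_iff_eq_empty] at hne
      rw [show sInf (A ε) = 0 by rw [hne]; exact Real.sInf_empty]
      simpa using hη
  · rw [Metric.tendsto_nhdsWithin_nhds]
    intro η hη
    obtain ⟨ε₀, hε₀, hsub⟩ := main (η/2) (by linarith)
    refine ⟨ε₀, hε₀, ?_⟩
    intro ε _ hd
    rw [Real.dist_eq, sub_zero] at hd ⊢
    have hsub' := hsub ε hd
    by_cases hne : (A ε).Nonempty
    · have bdd : BddAbove (A ε) := ⟨η/2, fun a ha => (hsub' ha).2⟩
      have h1 : sSup (A ε) ≤ η/2 := csSup_le hne fun a ha => (hsub' ha).2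
      obtain ⟨a, ha⟩ := hne
      have h2 : -(η/2) ≤ sSup (A ε) := le_trans (hsub' ha).1 (le_csSup bdd ha)
      rw [abs_lt]; constructor <;> linarith
    · rw [Set.not_nonempty_iff_eq_empty] at hne
      rw [show sSup (A ε) = 0 by rw [hne]; exact Real.sSup_empty]
      simpa using hη
end
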